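/- arXiv:2410.15361 — 9 statements merged into one kernel-verified Lean document; each statement's English description precedes it below -/
import Mathlib

section
/- Let (Ω, μ) be a probability space and g : Ω → ℝ a measurable function whose pushforward measure μ∘g⁻¹ is atomless (i.e. g has a continuous distribution). Define G(x) := μ{x' : g(x') ≤ g(x)}. Then for every x ∈ Ω with G(x) < 1, the integral ∫_Ω 𝟙[g(x̃) ≤ g(x)] / μ{x' : g(x') ≥ g(x̃)} dμ(x̃) equals −log(1 − G(x)). -/
/-! Everything is pushed forward to the law `ν` of `g`, whose cdf `F` is continuous because `ν`
has no atoms. The denominator is then `1 - F t`, and `{t ≤ c}` agrees `ν`-a.e. with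
`{F t ≤ F c}`, so the integrand is a function of `F t`. Since `F` pushes `ν` forward to the
uniform law on `[0, 1]` (probability integral transform), the integral becomes
`∫₀^{F c} du / (1 - u) = -log (1 - F c)`. -/

open MeasureTheory ProbabilityTheory Set Filter

lemma setIntegral_Icc_ite_le_div_one_sub {v : ℝ} (h0 : 0 ≤ v) (h1 : v < 1) :
    ∫ u in Icc (0 : ℝ) 1, (if u ≤ v then (1 : ℝ) else 0) / (1 - u) = -Real.log (1 - v) := by
  have : (fun u : ℝ ↦ (if u ≤ v then (1 : ℝ) else 0) / (1 - u)) =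
      (Iic v).indicator fun u ↦ (1 - u)⁻¹ := by
    ext u
    by_cases h : u ≤ v <;> simp [h]
  rw [this, integral_Icc_eq_integral_Ioc, setIntegral_indicator measurableSet_Iic, Ioc_inter_Iic,
    inf_of_le_right h1.le, ← intervalIntegral.integral_of_le h0,
    intervalIntegral.integral_comp_sub_left (fun u ↦ u⁻¹), sub_zero,
    integral_inv_of_pos (by linarith) one_pos, one_div, Real.log_inv]

namespace ProbabilityTheory

variable (ν : Measure ℝ) [IsProbabilityMeasure ν] [NullSingletonClass ν]

lemma continuous_cdf : Continuous (cdf ν) := by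
  refine continuous_iff_continuousAt.2 fun x ↦
    continuousAt_iff_continuous_left_right.2 ⟨?_, (cdf ν).right_continuous x⟩
  rw [← continuousWithinAt_Iio_iff_Iic, (monotone_cdf ν).continuousWithinAt_Iio_iff_leftLim_eq]
  have h := (cdf ν).measure_singleton x
  rw [measure_cdf, measure_singleton, eq_comm, ENNReal.ofReal_eq_zero, sub_nonpos] at h
  exact le_antisymm ((monotone_cdf ν).leftLim_le le_rfl) h

lemma exists_cdf_eq {u : ℝ} (h0 : 0 < u) (h1 : u < 1) : ∃ a, cdf ν a = u :=
  mem_range_of_exists_le_of_exists_ge (continuous_cdf ν)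
    (((tendsto_cdf_atBot ν).eventually (eventually_lt_nhds h0)).exists.imp fun _ ↦ le_of_lt)
    (((tendsto_cdf_atTop ν).eventually (eventually_gt_nhds h1)).exists.imp fun _ ↦ le_of_lt)

lemma measureReal_cdf_preimage_Iic {u : ℝ} (h0 : 0 ≤ u) (h1 : u < 1) :
    ν.real (cdf ν ⁻¹' Iic u) = u := by
  apply le_antisymm
  · refine le_of_forall_gt_imp_ge_of_dense fun u' hu' ↦ ?_
    rcases lt_or_ge u' 1 with hu'1 | hu'1
    · obtain ⟨a, ha⟩ := exists_cdf_eq ν (h0.trans_lt hu') hu'1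
      calc ν.real (cdf ν ⁻¹' Iic u) ≤ ν.real (Iic a) := measureReal_mono fun t ht ↦
            ((monotone_cdf ν).reflect_lt (lt_of_le_of_lt ht (ha ▸ hu'))).le
        _ = u' := by rw [← cdf_eq_real, ha]
    · exact measureReal_le_one.trans hu'1
  · rcases h0.eq_or_lt with rfl | h0
    · exact measureReal_nonneg
    · obtain ⟨a, rfl⟩ := exists_cdf_eq ν h0 h1
      calc cdf ν a = ν.real (Iic a) := cdf_eq_real ν a
        _ ≤ _ := measureReal_mono fun t ht ↦ monotone_cdf ν ht

lemma map_cdf_eq_restrict_Icc : ν.map (cdf ν) = volume.restrict (Icc 0 1) := by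
  have hF := (continuous_cdf ν).measurable
  have := Measure.isProbabilityMeasure_map (μ := ν) hF.aemeasurable
  refine Measure.ext_of_Iic _ _ fun u ↦ ?_
  rw [Measure.map_apply hF measurableSet_Iic, Measure.restrict_apply measurableSet_Iic,
    ← Ici_inter_Iic, inter_left_comm, Iic_inter_Iic, Ici_inter_Iic, Real.volume_Icc, sub_zero]
  rcases lt_or_ge u 0 with hu0 | hu0
  · have : cdf ν ⁻¹' Iic u = ∅ :=
      eq_empty_of_forall_notMem fun t ht ↦ (hu0.trans_le (cdf_nonneg ν t)).not_ge ht
    rw [this, measure_empty, ENNReal.ofReal_of_nonpos (inf_le_left.trans hu0.le)]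
  rcases lt_or_ge u 1 with hu1 | hu1
  · rw [inf_of_le_left hu1.le, ← ofReal_measureReal, measureReal_cdf_preimage_Iic ν hu0 hu1]
  · have : cdf ν ⁻¹' Iic u = univ :=
      eq_univ_of_forall fun t ↦ (cdf_le_one ν t).trans hu1
    rw [this, measure_univ, inf_of_le_right hu1, ENNReal.ofReal_one]

lemma integral_comp_cdf {f : ℝ → ℝ} (hf : AEStronglyMeasurable f (volume.restrict (Icc 0 1))) :
    ∫ t, f (cdf ν t) ∂ν = ∫ u in Icc 0 1, f u := by
  rw [← map_cdf_eq_restrict_Icc ν] at hf ⊢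
  exact (integral_map (continuous_cdf ν).aemeasurable hf).symm

lemma Iic_ae_eq_cdf_preimage_Iic {c : ℝ} (hc : cdf ν c < 1) :
    Iic c =ᵐ[ν] cdf ν ⁻¹' Iic (cdf ν c) := by
  refine ae_eq_of_subset_of_measure_ge (fun t ht ↦ monotone_cdf ν ht) ?_
    measurableSet_Iic.nullMeasurableSet (measure_ne_top _ _)
  rw [← ofReal_measureReal, measureReal_cdf_preimage_Iic ν (cdf_nonneg ν c) hc, ofReal_cdf]

lemma measureReal_Ici_eq_one_sub_cdf (t : ℝ) : ν.real (Ici t) = 1 - cdf ν t := by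
  rw [← compl_Iio, measureReal_compl measurableSet_Iio, probReal_univ,
    measureReal_congr Iio_ae_eq_Iic, cdf_eq_real]

theorem integral_ite_le_div_one_sub_cdf {c : ℝ} (hc : cdf ν c < 1) :
    ∫ t, (if t ≤ c then (1 : ℝ) else 0) / (1 - cdf ν t) ∂ν = -Real.log (1 - cdf ν c) := by
  have hae : (fun t ↦ (if t ≤ c then (1 : ℝ) else 0) / (1 - cdf ν t)) =ᵐ[ν]
      fun t ↦ (if cdf ν t ≤ cdf ν c then (1 : ℝ) else 0) / (1 - cdf ν t) := by
    filter_upwards [Iic_ae_eq_cdf_preimage_Iic ν hc] with t ht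
    change (t ≤ c) = (cdf ν t ≤ cdf ν c) at ht
    simp only [ht]
  rw [integral_congr_ae hae,
    integral_comp_cdf ν (f := fun u ↦ (if u ≤ cdf ν c then (1 : ℝ) else 0) / (1 - u))
      ((Measurable.ite measurableSet_Iic measurable_const measurable_const).div
        (measurable_const.sub measurable_id)).aestronglyMeasurable,
    setIntegral_Icc_ite_le_div_one_sub (cdf_nonneg ν c) hc]

end ProbabilityTheory

/-- **Proposition 1.** For a probability space `(Ω, μ)` and a measurable confidence
score `g : Ω → ℝ` with atomless pushforward, writing `G x = μ {x' | g x' ≤ g x}`,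
the AURC weight `α(x) = ∫ 𝟙[g x̃ ≤ g x] / μ {x' | g x' ≥ g x̃} dμ(x̃)` equals
`-log (1 - G x)` whenever `G x < 1`. -/
theorem aurc_weight_eq_neg_log {Ω : Type*} [MeasurableSpace Ω]
    (μ : Measure Ω) [IsProbabilityMeasure μ]
    (g : Ω → ℝ) (hg : Measurable g) [NullSingletonClass (μ.map g)]
    (G : Ω → ℝ) (hG : ∀ x, G x = (μ {x' | g x' ≤ g x}).toReal) :
    ∀ x : Ω, G x < 1 →
      ∫ xt, (if g xt ≤ g x then (1 : ℝ) else 0) / (μ {x' | g xt ≤ g x'}).toReal ∂μ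
        = -Real.log (1 - G x) := by
  intro x hx
  set ν := μ.map g
  have : IsProbabilityMeasure ν := Measure.isProbabilityMeasure_map hg.aemeasurable
  have hpre : ∀ s, MeasurableSet s → μ (g ⁻¹' s) = ν s := fun s hs ↦ (Measure.map_apply hg hs).symm
  have hGx : G x = cdf ν (g x) := by
    rw [hG, cdf_eq_real, measureReal_def, ← hpre _ measurableSet_Iic]; rfl
  have hden : ∀ t, (μ {x' | t ≤ g x'}).toReal = 1 - cdf ν t := fun t ↦ by
    rw [← measureReal_Ici_eq_one_sub_cdf, measureReal_def, ← hpre _ measurableSet_Ici]; rfl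
  simp_rw [hden, hGx]
  rw [← integral_map (f := fun t ↦ (if t ≤ g x then (1 : ℝ) else 0) / (1 - cdf ν t))
    hg.aemeasurable ((Measurable.ite measurableSet_Iic measurable_const measurable_const).div
      (measurable_const.sub (monotone_cdf ν).measurable)).aestronglyMeasurable]
  exact integral_ite_le_div_one_sub_cdf ν (hGx ▸ hx)
end

section
/- Let P be a probability measure on a product space X × Y with X-marginal μ, let g : X → ℝ be measurable with atomless pushforward μ∘g⁻¹, and let h : X × Y → ℝ be a nonnegative integrable function (the pointwise loss ℓ(f(x), y)). Define G(x) := μ{x' : g(x') ≤ g(x)}. Then the population AURC, defined as ∫_X ( ∫_{X×Y} h(x,y)·𝟙[g(x) ≥ g(x̃)] dP(x,y) ) / μ{x' : g(x') ≥ g(x̃)} dμ(x̃), equals ∫_{X×Y} (−log(1 − G(x))) · h(x,y) dP(x,y). -/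
/-!
Write `ν = μ ∘ g⁻¹` and `F t = ν (-∞, t]`. By Tonelli, the AURC equals
`∫ h(x, y) · (∫_{t ≤ g x} dν(t) / ν [t, ∞)) dP(x, y)`. As `ν` has no atoms, `ν [t, ∞) = 1 - F t`;
expanding `1 / (1 - F)` as a geometric series and using `∫_{t ≤ c} Fⁿ dν = F(c)ⁿ⁺¹ / (n + 1)`, the
inner integral is `-log (1 - F (g x))`. The thresholds with `ν [t, ∞) = 0`, where the selective risk
is a junk value, form a `ν`-null set. Both sides are computed as lower Lebesgue integrals, possibly
infinite, whose `toReal` is the corresponding Bochner integral.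
-/

open MeasureTheory Set
open scoped ENNReal

lemma ENNReal.tsum_ofReal_pow_succ_div {x : ℝ} (hx₀ : 0 ≤ x) (hx₁ : x < 1) :
    ∑' n : ℕ, ENNReal.ofReal x ^ (n + 1) / (n + 1) = ENNReal.ofReal (-Real.log (1 - x)) := by
  have hsum := Real.hasSum_pow_div_log_of_abs_lt_one (by rwa [abs_of_nonneg hx₀])
  rw [← hsum.tsum_eq, ENNReal.ofReal_tsum_of_nonneg (fun n => by positivity) hsum.summable]
  congr 1 with n
  rw [ENNReal.ofReal_div_of_pos (by positivity), ENNReal.ofReal_pow hx₀]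
  norm_cast

lemma neg_log_one_sub_toReal_measure_nonneg {α : Type*} [MeasurableSpace α] (μ : Measure α)
    [IsProbabilityMeasure μ] (s : Set α) : 0 ≤ -Real.log (1 - (μ s).toReal) :=
  neg_nonneg.2 <| Real.log_nonpos (sub_nonneg.2 measureReal_le_one)
    (sub_le_self _ ENNReal.toReal_nonneg)

lemma integral_mul_ite_eq_toReal_setLIntegral {Ω : Type*} [MeasurableSpace Ω] {P : Measure Ω}
    {f : Ω → ℝ} (hf : 0 ≤ f) (hfm : AEStronglyMeasurable f P) {p : Ω → Prop} [DecidablePred p]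
    (hp : MeasurableSet {ω | p ω}) :
    ∫ ω, f ω * (if p ω then 1 else 0) ∂P = (∫⁻ ω in {ω | p ω}, ENNReal.ofReal (f ω) ∂P).toReal := by
  rw [← integral_eq_lintegral_of_nonneg_ae (ae_of_all _ hf) hfm.restrict, ← integral_indicator hp]
  simp_rw [mul_ite, mul_one, mul_zero, indicator_apply, mem_ofPred_eq]

lemma measurable_setLIntegral_setOf_le {Ω : Type*} [MeasurableSpace Ω] (P : Measure Ω)
    (φ : Ω → ℝ) (H : Ω → ℝ≥0∞) : Measurable fun t => ∫⁻ ω in {ω | t ≤ φ ω}, H ω ∂P :=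
  Antitone.measurable fun _ _ hst => lintegral_mono_set fun _ hω => hst.trans hω

section CDF

variable (ν : Measure ℝ)

lemma measurable_measure_Iic : Measurable fun t => ν (Iic t) :=
  Monotone.measurable fun _ _ hst => measure_mono (Iic_subset_Iic.2 hst)

lemma measurable_measure_Ici : Measurable fun t => ν (Ici t) :=
  Antitone.measurable fun _ _ hst => measure_mono (Ici_subset_Ici.2 hst)

lemma setLIntegral_Iic_setLIntegral_Iic [SFinite ν] {f : ℝ → ℝ≥0∞} (hf : Measurable f) (c : ℝ) :
    ∫⁻ t in Iic c, ∫⁻ s in Iic t, f s ∂ν ∂ν = ∫⁻ s in Iic c, f s * ν (Icc s c) ∂ν := by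
  have hmeas : Measurable (Function.uncurry fun t s => (Iic t).indicator f s) :=
    (hf.comp measurable_snd).indicator (measurableSet_le measurable_snd measurable_fst)
  have hinner (s : ℝ) : ∫⁻ t in Iic c, (Iic t).indicator f s ∂ν
      = (Iic c).indicator (fun s => f s * ν (Icc s c)) s := by
    have (t : ℝ) : (Iic t).indicator f s = (Ici s).indicator (fun _ => f s) t := by
      by_cases hst : s ≤ t <;> simp [hst]
    simp_rw [this, lintegral_indicator measurableSet_Ici, setLIntegral_const,
      Measure.restrict_apply measurableSet_Ici, Ici_inter_Iic]
    by_cases hs : s ≤ c <;> simp [hs]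
  calc ∫⁻ t in Iic c, ∫⁻ s in Iic t, f s ∂ν ∂ν
      = ∫⁻ t in Iic c, ∫⁻ s, (Iic t).indicator f s ∂ν ∂ν := by
        simp_rw [lintegral_indicator measurableSet_Iic]
    _ = ∫⁻ s, ∫⁻ t in Iic c, (Iic t).indicator f s ∂ν ∂ν :=
        lintegral_lintegral_swap hmeas.aemeasurable
    _ = ∫⁻ s in Iic c, f s * ν (Icc s c) ∂ν := by
        simp_rw [hinner, lintegral_indicator measurableSet_Iic]

lemma measure_Icc_add_measure_Iic [NullSingletonClass ν] {s c : ℝ} (hsc : s ≤ c) :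
    ν (Icc s c) + ν (Iic s) = ν (Iic c) := by
  rw [measure_congr Ioc_ae_eq_Icc.symm, add_comm, ← measure_union (Iic_disjoint_Ioc le_rfl)
    measurableSet_Ioc, Iic_union_Ioc_eq_Iic hsc]

/- With `F t = ν (Iic t)`: Fubini turns `∫_{t ≤ c} Fⁿ⁺¹` into `(n + 1) ∫_{s ≤ c} Fⁿ(s) ν [s, c]`,
and `ν [s, c] = F c - F s` because `ν` has no atoms. -/
lemma natCast_add_one_mul_setLIntegral_Iic_pow [SFinite ν] [NullSingletonClass ν] (n : ℕ)
    (c : ℝ) : (n + 1) * ∫⁻ t in Iic c, ν (Iic t) ^ n ∂ν = ν (Iic c) ^ (n + 1) := by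
  induction n generalizing c with
  | zero => simp
  | succ n ih =>
    have hF := measurable_measure_Iic ν
    set I := ∫⁻ t in Iic c, ν (Iic t) ^ (n + 1) ∂ν
    set J := ∫⁻ s in Iic c, ν (Iic s) ^ n * ν (Icc s c) ∂ν with hJ
    have hI : I = (n + 1) * J := by
      rw [hJ, ← setLIntegral_Iic_setLIntegral_Iic ν (hF.pow_const n),
        ← lintegral_const_mul' _ _ (by finiteness)]
      exact setLIntegral_congr_fun measurableSet_Iic fun t _ => (ih t).symm
    have hJI : J + I = ν (Iic c) * ∫⁻ t in Iic c, ν (Iic t) ^ n ∂ν := by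
      rw [← lintegral_add_right _ (hF.pow_const _), ← lintegral_const_mul _ (hF.pow_const _)]
      refine setLIntegral_congr_fun measurableSet_Iic fun s hs => ?_
      rw [pow_succ, ← mul_add, measure_Icc_add_measure_Iic ν hs, mul_comm]
    calc ((n + 1 : ℕ) + 1 : ℝ≥0∞) * I = (n + 1) * (J + I) := by
          rw [mul_add, ← hI]; push_cast; ring
      _ = ν (Iic c) ^ (n + 1 + 1) := by
          rw [hJI, mul_left_comm, ih]; ring

lemma measure_Ici_eq_one_sub_measure_Iic [IsProbabilityMeasure ν] [NullSingletonClass ν]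
    (t : ℝ) : ν (Ici t) = 1 - ν (Iic t) := by
  rw [measure_congr Ioi_ae_eq_Ici.symm, ← compl_Iic, prob_compl_eq_one_sub measurableSet_Iic]

/- Expand `1 / ν [t, ∞) = 1 / (1 - F t)` as a geometric series in `F t = ν (Iic t)`: the `n`-th term
integrates to `F(c)ⁿ⁺¹/(n+1)`, and these sum to `-log (1 - F c)`. -/
lemma setLIntegral_Iic_inv_measure_Ici [IsProbabilityMeasure ν] [NullSingletonClass ν] {c : ℝ}
    (hc : ν (Ici c) ≠ 0) :
    ∫⁻ t in Iic c, (ν (Ici t))⁻¹ ∂ν = ENNReal.ofReal (-Real.log (1 - (ν (Iic c)).toReal)) := by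
  have hc₁ : (ν (Iic c)).toReal < 1 := by
    rw [measure_Ici_eq_one_sub_measure_Iic, ne_eq, tsub_eq_zero_iff_le, not_le] at hc
    exact ENNReal.toReal_lt_of_lt_ofReal (by simpa using hc)
  have hpow (n : ℕ) : ∫⁻ t in Iic c, ν (Iic t) ^ n ∂ν = ν (Iic c) ^ (n + 1) / (n + 1) := by
    rw [ENNReal.eq_div_iff (by positivity) (by finiteness),
      natCast_add_one_mul_setLIntegral_Iic_pow]
  calc ∫⁻ t in Iic c, (ν (Ici t))⁻¹ ∂ν = ∫⁻ t in Iic c, ∑' n : ℕ, ν (Iic t) ^ n ∂ν := by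
        simp_rw [measure_Ici_eq_one_sub_measure_Iic, ENNReal.tsum_geometric]
    _ = ∑' n : ℕ, ν (Iic c) ^ (n + 1) / (n + 1) := by
        rw [lintegral_tsum fun n => ((measurable_measure_Iic ν).pow_const n).aemeasurable]
        simp_rw [hpow]
    _ = ENNReal.ofReal (-Real.log (1 - (ν (Iic c)).toReal)) := by
        rw [← ENNReal.tsum_ofReal_pow_succ_div ENNReal.toReal_nonneg hc₁,
          ENNReal.ofReal_toReal (by finiteness)]

/- `{t | ν [t, ∞) = 0}` is an up-set, covered by countably many null rays `[q, ∞)`: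
one at each rational point of it, and one at its least element if there is one. -/
lemma ae_measure_Ici_ne_zero : ∀ᵐ t ∂ν, ν (Ici t) ≠ 0 := by
  set S := {t : ℝ | ν (Ici t) = 0}
  have hS_upper (s t : ℝ) (hs : s ∈ S) (hst : s ≤ t) : t ∈ S :=
    measure_mono_null (Ici_subset_Ici.2 hst) hs
  set C := {t ∈ S | ∀ s ∈ S, t ≤ s} ∪ (S ∩ range ((↑) : ℚ → ℝ))
  have hC : C.Countable := by
    refine Countable.union (Subsingleton.countable fun a ha b hb => ?_)
      ((countable_range _).mono inter_subset_right)
    exact le_antisymm (ha.2 b hb.1) (hb.2 a ha.1)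
  have hcover : S ⊆ ⋃ t ∈ C, Ici t := by
    intro t ht
    by_cases hmin : ∀ s ∈ S, t ≤ s
    · exact mem_biUnion (Or.inl ⟨ht, hmin⟩) (mem_Ici.2 le_rfl)
    · obtain ⟨s, hs, hst⟩ : ∃ s ∈ S, s < t := by simpa using hmin
      obtain ⟨q, hsq, hqt⟩ := exists_rat_btwn hst
      exact mem_biUnion (Or.inr ⟨hS_upper s q hs hsq.le, q, rfl⟩) hqt.le
  exact measure_mono_null (fun t ht => hcover (not_not.1 ht))
    ((measure_biUnion_null_iff hC).2 fun t ht => ht.elim And.left And.left)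

end CDF

section Threshold

variable {X Ω : Type*} [MeasurableSpace X] [MeasurableSpace Ω]

lemma lintegral_setLIntegral_le_mul_swap (μ : Measure X) (P : Measure Ω) [SFinite μ] [SFinite P]
    {g : X → ℝ} (hg : Measurable g) {φ : Ω → ℝ} (hφ : Measurable φ) {w : ℝ → ℝ≥0∞}
    (hw : Measurable w) {H : Ω → ℝ≥0∞} (hH : AEMeasurable H P) :
    ∫⁻ x, (∫⁻ ω in {ω | g x ≤ φ ω}, H ω ∂P) * w (g x) ∂μ
      = ∫⁻ ω, H ω * ∫⁻ t in Iic (φ ω), w t ∂μ.map g ∂P := by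
  set K : X × Ω → ℝ≥0∞ := {q | g q.1 ≤ φ q.2}.indicator fun q => H q.2 * w (g q.1)
  have hK : AEMeasurable K (μ.prod P) :=
    (hH.comp_snd.mul (hw.comp (hg.comp measurable_fst)).aemeasurable).indicator
      (measurableSet_le (hg.comp measurable_fst) (hφ.comp measurable_snd))
  have hx (x : X) : (∫⁻ ω in {ω | g x ≤ φ ω}, H ω ∂P) * w (g x) = ∫⁻ ω, K (x, ω) ∂P := by
    rw [← lintegral_mul_const'' _ hH.restrict,
      ← lintegral_indicator (measurableSet_le measurable_const hφ)]
    rfl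
  have hω (ω : Ω) : ∫⁻ x, K (x, ω) ∂μ = H ω * ∫⁻ t in Iic (φ ω), w t ∂μ.map g := by
    have hwφ : Measurable ((Iic (φ ω)).indicator w) := hw.indicator measurableSet_Iic
    rw [← lintegral_indicator measurableSet_Iic, lintegral_map hwφ hg,
      ← lintegral_const_mul _ (show Measurable fun x => (Iic (φ ω)).indicator w (g x) from
        hwφ.comp hg)]
    congr 1 with x
    by_cases hxω : g x ≤ φ ω <;> simp [K, hxω]
  simp_rw [hx, lintegral_lintegral_swap (f := fun x ω => K (x, ω)) hK, hω]

lemma lintegral_setLIntegral_le_div_measure_Ici (P : Measure Ω) [SFinite P] {π : Ω → X}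
    (hπ : Measurable π) {g : X → ℝ} (hg : Measurable g) (μ : Measure X) (hμ : μ = P.map π)
    [IsProbabilityMeasure (μ.map g)] [NullSingletonClass (μ.map g)] {H : Ω → ℝ≥0∞}
    (hH : AEMeasurable H P) :
    ∫⁻ x, (∫⁻ ω in {ω | g x ≤ g (π ω)}, H ω ∂P) / μ.map g (Ici (g x)) ∂μ
      = ∫⁻ ω, H ω * ENNReal.ofReal (-Real.log (1 - (μ.map g (Iic (g (π ω)))).toReal)) ∂P := by
  subst hμ
  have hpos : ∀ᵐ ω ∂P, (P.map π).map g (Ici (g (π ω))) ≠ 0 := by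
    refine ae_of_ae_map (p := fun t => (P.map π).map g (Ici t) ≠ 0) (hg.comp hπ).aemeasurable ?_
    rw [← Measure.map_map hg hπ]
    exact ae_measure_Ici_ne_zero _
  simp_rw [div_eq_mul_inv]
  rw [lintegral_setLIntegral_le_mul_swap _ P hg (φ := fun ω => g (π ω)) (hg.comp hπ)
    (w := fun t => ((P.map π).map g (Ici t))⁻¹) (measurable_measure_Ici _).inv hH]
  refine lintegral_congr_ae ?_
  filter_upwards [hpos] with ω hω
  rw [setLIntegral_Iic_inv_measure_Ici _ hω]

end Threshold

/-- The population AURC, defined as the expectation over thresholds `g x̃` of the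
selective risk, equals the reweighted risk `∫ (-log (1 - G x)) · h(x,y) dP`. -/
theorem population_aurc_eq_reweighted_risk {X Y : Type*} [MeasurableSpace X] [MeasurableSpace Y]
    (P : Measure (X × Y)) [IsProbabilityMeasure P]
    (g : X → ℝ) (hg : Measurable g)
    (h : X × Y → ℝ) (hpos : ∀ p, 0 ≤ h p) (hint : Integrable h P)
    (μ : Measure X) (hμ : μ = P.map Prod.fst) [NullSingletonClass (μ.map g)]
    (G : X → ℝ) (hG : ∀ x, G x = (μ {x' | g x' ≤ g x}).toReal) :
    ∫ xt, (∫ p, h p * (if g xt ≤ g p.1 then (1 : ℝ) else 0) ∂P) /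
        (μ {x' | g xt ≤ g x'}).toReal ∂μ
      = ∫ p, (-Real.log (1 - G p.1)) * h p ∂P := by
  have : IsProbabilityMeasure μ := hμ ▸ Measure.isProbabilityMeasure_map measurable_fst.aemeasurable
  have : IsProbabilityMeasure (μ.map g) := Measure.isProbabilityMeasure_map hg.aemeasurable
  obtain rfl : G = fun x => (μ.map g (Iic (g x))).toReal :=
    funext fun x => by rw [hG, Measure.map_apply hg measurableSet_Iic]; rfl
  have hgfst : Measurable fun p : X × Y => g p.1 := hg.comp measurable_fst
  have hh_fin : ∫⁻ p, ENNReal.ofReal (h p) ∂P ≠ ∞ :=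
    ((hasFiniteIntegral_iff_ofReal (ae_of_all _ hpos)).1 hint.2).ne
  calc _ = ∫ x, ((∫⁻ p in {p | g x ≤ g p.1}, ENNReal.ofReal (h p) ∂P)
          / μ.map g (Ici (g x))).toReal ∂μ := by
        congr 1 with x
        rw [integral_mul_ite_eq_toReal_setLIntegral hpos hint.1
          (measurableSet_le measurable_const hgfst), ENNReal.toReal_div,
          Measure.map_apply hg measurableSet_Ici]
        rfl
    _ = (∫⁻ x, (∫⁻ p in {p | g x ≤ g p.1}, ENNReal.ofReal (h p) ∂P)
          / μ.map g (Ici (g x)) ∂μ).toReal := by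
        refine integral_toReal (((measurable_setLIntegral_setOf_le P _ _).comp hg).div
          ((measurable_measure_Ici _).comp hg)).aemeasurable ?_
        filter_upwards [ae_of_ae_map hg.aemeasurable (ae_measure_Ici_ne_zero (μ.map g))] with x hx
        exact ENNReal.div_lt_top ((setLIntegral_le_lintegral _ _).trans_lt hh_fin.lt_top).ne hx
    _ = (∫⁻ p, ENNReal.ofReal (h p)
          * ENNReal.ofReal (-Real.log (1 - (μ.map g (Iic (g p.1))).toReal)) ∂P).toReal := by
        rw [lintegral_setLIntegral_le_div_measure_Ici P measurable_fst hg μ hμ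
          hint.1.aemeasurable.ennreal_ofReal]
    _ = _ := by
        rw [integral_eq_lintegral_of_nonneg_ae
          (ae_of_all _ fun p => mul_nonneg (neg_log_one_sub_toReal_measure_nonneg _ _) (hpos p))
          ((((measurable_measure_Iic _).comp hgfst).ennreal_toReal.const_sub 1).log.neg
            |>.aestronglyMeasurable.mul hint.1)]
        simp_rw [ENNReal.ofReal_mul (neg_log_one_sub_toReal_measure_nonneg _ _), mul_comm]
end

section
/- Let n ≥ 1, let g : Fin n → ℝ be injective (distinct confidence scores), and for each i define the rank rᵢ := #{j : g(j) ≤ g(i)} ∈ {1, …, n}. Then for every i, ∑_{j=1}^{n} 𝟙[g(i) ≥ g(j)] / (#{k : g(k) ≥ g(j)}) = H_n − H_{n−rᵢ}, where H_m := ∑_{k=1}^{m} 1/k is the m-th harmonic number (H_0 := 0). Consequently, for any loss values ℓ : Fin n → ℝ, the empirical AURC (1/n)∑_{j=1}^{n} [ (1/n)∑_{i=1}^{n} ℓ(i)·𝟙[g(i) ≥ g(j)] ] / [ (1/n)∑_{k=1}^{n} 𝟙[g(k) ≥ g(j)] ] equals the plug-in form (1/n)∑_{i=1}^{n} (H_n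 − H_{n−rᵢ}) ℓ(i). -/
/-! Peel off the sample `a` of lowest score. As scores are distinct, no other sample `j` has
`g j ≤ g a`, so its count `#{k | g j ≤ g k}` is unchanged, while `a` itself has count `n` and adds
`1/n = H_n − H_{n−1}` exactly when it lies at or below the threshold. Induction on the minimum
thus gives `∑_{g j ≤ v} 1/#{k | g j ≤ g k} = H_n − H_{n−r}` for every threshold `v`, `r` being the
number of samples at or below `v`. The AURC identity is this formula after cancelling the factors
`1/n` and exchanging the two sums. -/

open Finset

/-- `harmonicR m = H_m = ∑_{k=1}^m 1/k`, with `H_0 = 0`. -/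
noncomputable def harmonicR (m : ℕ) : ℝ := ∑ k ∈ Finset.range m, (1 : ℝ) / (k + 1)

lemma harmonicR_succ (m : ℕ) : harmonicR (m + 1) = harmonicR m + 1 / (m + 1) := by
  simp [harmonicR, Finset.sum_range_succ]

lemma sum_one_div_card_ge_eq_harmonicR_sub {ι α : Type*} [DecidableEq ι] [LinearOrder α]
    (g : ι → α) (s : Finset ι) (hg : Set.InjOn g s) (v : α) :
    ∑ j ∈ s with g j ≤ v, (1 : ℝ) / #{k ∈ s | g j ≤ g k}
      = harmonicR #s - harmonicR (#s - #{j ∈ s | g j ≤ v}) := by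
  induction s using Finset.induction_on_min_value g with
  | empty => simp
  | insert a t ha hmin ih =>
    have hlt : ∀ x ∈ t, g a < g x := fun x hx =>
      (hmin x hx).lt_of_ne fun h => ha (hg (mem_insert_self a t) (mem_insert_of_mem hx) h ▸ hx)
    have hupper : ∀ x ∈ t, {k ∈ insert a t | g x ≤ g k} = {k ∈ t | g x ≤ g k} := fun x hx => by
      rw [filter_insert, if_neg (hlt x hx).not_ge]
    by_cases hav : g a ≤ v
    · have hlower : {j ∈ insert a t | g j ≤ v} = insert a {j ∈ t | g j ≤ v} := by
        rw [filter_insert, if_pos hav]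
      have hmin_upper : {k ∈ insert a t | g a ≤ g k} = insert a t :=
        filter_true_of_mem fun k hk => (mem_insert.1 hk).elim (fun h => h ▸ le_rfl) (hmin k)
      have hrest : ∑ x ∈ t with g x ≤ v, (1 : ℝ) / #{k ∈ insert a t | g x ≤ g k}
          = ∑ x ∈ t with g x ≤ v, (1 : ℝ) / #{k ∈ t | g x ≤ g k} :=
        sum_congr rfl fun x hx => by rw [hupper x (mem_filter.1 hx).1]
      rw [hlower, sum_insert (by simp [ha]), hmin_upper, hrest, ih (hg.mono (by simp)),
        card_insert_of_notMem ha, card_insert_of_notMem (by simp [ha]), Nat.add_sub_add_right,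
        harmonicR_succ]
      push_cast
      ring
    · have hlower : {j ∈ insert a t | g j ≤ v} = ∅ :=
        filter_eq_empty_iff.2 fun x hx hxv => hav ((mem_insert.1 hx).elim
          (fun h => h ▸ hxv) fun hx => (hmin x hx).trans hxv)
      simp [hlower]

theorem empirical_aurc_eq_plugin_general (n : ℕ) (g : Fin n → ℝ)
    (hg : Function.Injective g)
    (r : Fin n → ℕ) (hr : ∀ i, r i = (Finset.univ.filter fun j => g j ≤ g i).card) :
    (∀ i, ∑ j, (if g j ≤ g i then (1 : ℝ) else 0) /
        ((Finset.univ.filter fun k => g j ≤ g k).card : ℝ)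
      = harmonicR n - harmonicR (n - r i))
    ∧ ∀ ℓ : Fin n → ℝ,
      (1 / n : ℝ) * ∑ j, ((1 / n : ℝ) * ∑ i, ℓ i * (if g j ≤ g i then (1 : ℝ) else 0)) /
          ((1 / n : ℝ) * ∑ k, (if g j ≤ g k then (1 : ℝ) else 0))
        = (1 / n : ℝ) * ∑ i, (harmonicR n - harmonicR (n - r i)) * ℓ i := by
  have hweight : ∀ i, ∑ j, (if g j ≤ g i then (1 : ℝ) else 0) /
      ((Finset.univ.filter fun k => g j ≤ g k).card : ℝ) = harmonicR n - harmonicR (n - r i) := by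
    intro i
    simpa [hr i, sum_filter, ite_div] using
      sum_one_div_card_ge_eq_harmonicR_sub g univ hg.injOn (g i)
  refine ⟨hweight, fun ℓ => congrArg _ ?_⟩
  calc ∑ j, ((1 / n : ℝ) * ∑ i, ℓ i * (if g j ≤ g i then (1 : ℝ) else 0)) /
          ((1 / n : ℝ) * ∑ k, (if g j ≤ g k then (1 : ℝ) else 0))
      = ∑ j, ∑ i, ℓ i * ((if g j ≤ g i then (1 : ℝ) else 0) /
          ((Finset.univ.filter fun k => g j ≤ g k).card : ℝ)) :=
        sum_congr rfl fun j _ => by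
          rw [mul_div_mul_left _ _ (by simp [j.pos.ne']), sum_boole, sum_div]
          simp only [mul_div_assoc]
    _ = ∑ i, (harmonicR n - harmonicR (n - r i)) * ℓ i := by
        rw [sum_comm]
        simp only [← mul_sum, hweight, mul_comm]

/-- For injective confidence scores `g` on `n` samples with ranks
`rᵢ = #{j : g j ≤ g i}`, the inner weight sum equals `H_n − H_{n−rᵢ}`, and hence
the empirical AURC double sum equals the plug-in form
`(1/n) ∑ᵢ (H_n − H_{n−rᵢ}) ℓᵢ`. -/
theorem empirical_aurc_eq_plugin (n : ℕ) (hn : 1 ≤ n) (g : Fin n → ℝ)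
    (hg : Function.Injective g)
    (r : Fin n → ℕ) (hr : ∀ i, r i = (Finset.univ.filter fun j => g j ≤ g i).card) :
    (∀ i, ∑ j, (if g j ≤ g i then (1 : ℝ) else 0) /
        ((Finset.univ.filter fun k => g j ≤ g k).card : ℝ)
      = harmonicR n - harmonicR (n - r i))
    ∧ ∀ ℓ : Fin n → ℝ,
      (1 / n : ℝ) * ∑ j, ((1 / n : ℝ) * ∑ i, ℓ i * (if g j ≤ g i then (1 : ℝ) else 0)) /
          ((1 / n : ℝ) * ∑ k, (if g j ≤ g k then (1 : ℝ) else 0))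
        = (1 / n : ℝ) * ∑ i, (harmonicR n - harmonicR (n - r i)) * ℓ i :=
  empirical_aurc_eq_plugin_general n g hg r hr
end

section
/- For all natural numbers n ≥ 1 and r with 1 ≤ r ≤ n, ∫₀¹ (log(1 − x))² · x^{r−1}(1 − x)^{n−r} / B(r, n+1−r) dx = (H_n − H_{n−r})² + ∑_{k=n+1−r}^{n} 1/k², where B denotes the Beta function and H_m := ∑_{k=1}^{m} 1/k is the m-th harmonic number (H_0 := 0). -/
/-- The Beta function at natural arguments: `B(a, b) = ∫₀¹ t^(a−1) (1−t)^(b−1) dt`. -/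
noncomputable def betaFn (a b : ℕ) : ℝ := ∫ t in (0 : ℝ)..1, t ^ (a - 1) * (1 - t) ^ (b - 1)

open Real MeasureTheory intervalIntegral Set
open scoped Nat

/-!
Write `P(a, b) = ∫₀¹ xᵃ (1-x)ᵇ dx` and `J(a, b) = ∫₀¹ log(1-x)² xᵃ (1-x)ᵇ dx`.
Splitting `x = 1 - (1 - x)` gives `P(a+1, b) = P(a, b) - P(a, b+1)` and the same recurrence
for `J`, so both are determined by induction on `a` from `P(0, b) = 1/(b+1)` and
`J(0, b) = 2/(b+1)³`. The first gives `P(a, b) = a! b! / (a+b+1)!`; the second is solved by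
`J(a, b) = P(a, b) D(b, a+b+1)` with `D(m, n) = (H_n - H_m)² + ∑_{k=m+1}^{n} 1/k²`, because `D`
satisfies the matching recurrence `(n - m) D(m, n+1) = (n+1) D(m, n) - (m+1) D(m+1, n+1)`.
-/

noncomputable def logSqMulPowPrimitive (b : ℕ) (x : ℝ) : ℝ :=
  x ^ (b + 1) * (log x ^ 2 / (b + 1) - 2 * log x / (b + 1) ^ 2 + 2 / (b + 1) ^ 3)

theorem hasDerivAt_logSqMulPowPrimitive (b : ℕ) {x : ℝ} (hx : 0 < x) :
    HasDerivAt (logSqMulPowPrimitive b) (log x ^ 2 * x ^ b) x := by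
  have hlog : HasDerivAt log x⁻¹ x := hasDerivAt_log hx.ne'
  have hpow : HasDerivAt (fun x : ℝ => x ^ (b + 1)) ((b + 1 : ℕ) * x ^ b) x := by
    simpa using hasDerivAt_pow (b + 1) x
  have h := hpow.mul ((((hlog.pow 2).div_const ((b : ℝ) + 1)).sub
    ((hlog.const_mul 2).div_const (((b : ℝ) + 1) ^ 2))).add_const (2 / ((b : ℝ) + 1) ^ 3))
  refine h.congr_deriv ?_
  have : (b : ℝ) + 1 ≠ 0 := by positivity
  simp only [Pi.sub_apply, Pi.pow_apply]
  push_cast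
  field_simp
  ring

theorem continuousOn_mul_log_sq : ContinuousOn (fun x : ℝ => x * log x ^ 2) (Ici 0) := by
  -- `x log² x = 4 (√x log √x)²` for `x ≥ 0`, and `y ↦ y log y` is continuous at `0`.
  refine ((continuous_mul_log.comp continuous_sqrt).pow 2).continuousOn.const_smul (4 : ℝ)
    |>.congr fun x (hx : 0 ≤ x) => ?_
  simp only [Pi.smul_apply, Pi.pow_apply, Function.comp_apply, smul_eq_mul, log_sqrt hx]
  linear_combination (-(log x ^ 2)) * sq_sqrt hx

theorem continuousOn_logSqMulPowPrimitive (b : ℕ) :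
    ContinuousOn (logSqMulPowPrimitive b) (Ici 0) := by
  have h : ContinuousOn (fun x : ℝ => x ^ b * (x * log x ^ 2) / (b + 1)
      - 2 * (x ^ b * (x * log x)) / (b + 1) ^ 2 + 2 * x ^ (b + 1) / (b + 1) ^ 3) (Ici 0) := by
    have := continuous_mul_log
    have := continuousOn_mul_log_sq
    fun_prop
  refine h.congr fun x _ => ?_
  simp only [logSqMulPowPrimitive]
  ring

theorem intervalIntegrable_log_sq_mul_pow (b : ℕ) :
    IntervalIntegrable (fun x : ℝ => log x ^ 2 * x ^ b) volume 0 1 :=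
  intervalIntegrable_deriv_of_nonneg
    ((continuousOn_logSqMulPowPrimitive b).mono <| by
      rw [uIcc_of_le zero_le_one]
      exact Icc_subset_Ici_self)
    (fun x hx => hasDerivAt_logSqMulPowPrimitive b (by simpa using hx.1))
    fun x hx => mul_nonneg (sq_nonneg _) (pow_nonneg (by simpa using hx.1.le) b)

theorem integral_log_sq_mul_pow (b : ℕ) :
    ∫ x in (0 : ℝ)..1, log x ^ 2 * x ^ b = 2 / ((b : ℝ) + 1) ^ 3 := by
  rw [integral_eq_sub_of_hasDerivAt_of_le zero_le_one
    ((continuousOn_logSqMulPowPrimitive b).mono Icc_subset_Ici_self)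
    (fun x hx => hasDerivAt_logSqMulPowPrimitive b hx.1) (intervalIntegrable_log_sq_mul_pow b)]
  simp [logSqMulPowPrimitive]

noncomputable def betaWeightedIntegral (f : ℝ → ℝ) (a b : ℕ) : ℝ :=
  ∫ x in (0 : ℝ)..1, f x * (x ^ a * (1 - x) ^ b)

theorem betaWeightedIntegral_zero_left (f : ℝ → ℝ) (b : ℕ) :
    betaWeightedIntegral f 0 b = ∫ x in (0 : ℝ)..1, f (1 - x) * x ^ b := by
  simpa [betaWeightedIntegral] using
    integral_comp_sub_left (a := 0) (b := 1) (fun x => f (1 - x) * x ^ b) 1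

theorem betaWeightedIntegral_succ_left {f : ℝ → ℝ} (hf : IntervalIntegrable f volume 0 1)
    (a b : ℕ) :
    betaWeightedIntegral f (a + 1) b =
      betaWeightedIntegral f a b - betaWeightedIntegral f a (b + 1) := by
  have hint (c : ℕ) : IntervalIntegrable (fun x => f x * (x ^ a * (1 - x) ^ c)) volume 0 1 :=
    hf.mul_continuousOn (by fun_prop)
  rw [betaWeightedIntegral, betaWeightedIntegral, betaWeightedIntegral,
    ← integral_sub (hint b) (hint (b + 1))]
  congr 1 with x
  ring

theorem betaWeightedIntegral_one (a b : ℕ) :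
    betaWeightedIntegral 1 a b = (a ! * b ! : ℝ) / (a + b + 1)! := by
  induction a generalizing b with
  | zero =>
    rw [betaWeightedIntegral_zero_left, zero_add, Nat.factorial_succ, Nat.factorial_zero]
    simp only [Pi.one_apply, one_mul, integral_pow, one_pow, zero_pow b.succ_ne_zero, sub_zero]
    push_cast
    field_simp
  | succ a ih =>
    rw [betaWeightedIntegral_succ_left (f := 1) intervalIntegrable_const, ih, ih,
      show a + 1 + b + 1 = a + b + 1 + 1 by omega, show a + (b + 1) + 1 = a + b + 1 + 1 by omega]
    simp only [Nat.factorial_succ]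
    push_cast
    field_simp
    ring

noncomputable def harmonicSqR (m : ℕ) : ℝ := ∑ k ∈ Finset.range m, 1 / ((k : ℝ) + 1) ^ 2

theorem sum_Icc_one_div_sq {m n : ℕ} (h : m ≤ n) :
    ∑ k ∈ Finset.Icc (m + 1) n, (1 : ℝ) / (k : ℝ) ^ 2 = harmonicSqR n - harmonicSqR m := by
  induction n, h using Nat.le_induction with
  | base => simp
  | succ n hmn ih =>
    rw [Finset.sum_Icc_succ_top (by omega), ih]
    simp only [harmonicSqR, Finset.sum_range_succ]
    push_cast
    ring

/-- `E[log(1-X)²]` for `X ~ Beta(n - m, m + 1)`. -/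
noncomputable def betaLogSqMoment (m n : ℕ) : ℝ :=
  (harmonicR n - harmonicR m) ^ 2 + (harmonicSqR n - harmonicSqR m)

theorem betaLogSqMoment_self_succ (m : ℕ) :
    betaLogSqMoment m (m + 1) = 2 / ((m : ℝ) + 1) ^ 2 := by
  simp only [betaLogSqMoment, harmonicR, harmonicSqR, Finset.sum_range_succ]
  field_simp
  ring

theorem betaLogSqMoment_succ (m n : ℕ) :
    ((n : ℝ) - m) * betaLogSqMoment m (n + 1) =
      (n + 1) * betaLogSqMoment m n - (m + 1) * betaLogSqMoment (m + 1) (n + 1) := by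
  simp only [betaLogSqMoment, harmonicR, harmonicSqR, Finset.sum_range_succ]
  field_simp
  ring

theorem betaWeightedIntegral_log_one_sub_sq (a b : ℕ) :
    betaWeightedIntegral (fun x => log (1 - x) ^ 2) a b =
      betaWeightedIntegral 1 a b * betaLogSqMoment b (a + b + 1) := by
  have hlog : IntervalIntegrable (fun x : ℝ => log (1 - x) ^ 2) volume 0 1 := by
    simpa using ((intervalIntegrable_log_sq_mul_pow 0).comp_sub_left 1).symm
  induction a generalizing b with
  | zero =>
    rw [betaWeightedIntegral_one, betaWeightedIntegral_zero_left]
    simp only [sub_sub_cancel, integral_log_sq_mul_pow, zero_add, betaLogSqMoment_self_succ,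
      Nat.factorial_succ b, Nat.factorial_zero]
    push_cast
    field_simp
  | succ a ih =>
    have hrec := betaLogSqMoment_succ b (a + b + 1)
    rw [betaWeightedIntegral_succ_left hlog, ih, ih, betaWeightedIntegral_one,
      betaWeightedIntegral_one, betaWeightedIntegral_one,
      show a + 1 + b + 1 = a + b + 1 + 1 by omega, show a + (b + 1) + 1 = a + b + 1 + 1 by omega]
    push_cast [Nat.factorial_succ] at hrec ⊢
    field_simp
    linear_combination -hrec

theorem beta_integral_sq_log_general (n r : ℕ) (hr1 : 1 ≤ r) (hrn : r ≤ n) :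
    ∫ x in (0 : ℝ)..1,
        (Real.log (1 - x)) ^ 2 * (x ^ (r - 1) * (1 - x) ^ (n - r) / betaFn r (n + 1 - r))
      = (harmonicR n - harmonicR (n - r)) ^ 2
        + ∑ k ∈ Finset.Icc (n + 1 - r) n, (1 : ℝ) / (k : ℝ) ^ 2 := by
  have hB : betaFn r (n + 1 - r) = betaWeightedIntegral 1 (r - 1) (n - r) := by
    simp only [betaFn, betaWeightedIntegral, Pi.one_apply, one_mul,
      show n + 1 - r - 1 = n - r by omega]
  have hidx : r - 1 + (n - r) + 1 = n := by omega
  have hB_ne : betaWeightedIntegral 1 (r - 1) (n - r) ≠ 0 := by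
    rw [betaWeightedIntegral_one]
    positivity
  simp_rw [← mul_div_assoc, intervalIntegral.integral_div, hB]
  rw [← betaWeightedIntegral, betaWeightedIntegral_log_one_sub_sq, mul_div_cancel_left₀ _ hB_ne,
    hidx, show n + 1 - r = n - r + 1 by omega, sum_Icc_one_div_sq (Nat.sub_le n r), betaLogSqMoment]

/-- The Beta(r, n+1−r) expectation of `log(1−x)²` equals
`(H_n − H_{n−r})² + ∑_{k=n+1−r}^{n} 1/k²`. -/
theorem beta_integral_sq_log (n r : ℕ) (hn : 1 ≤ n) (hr1 : 1 ≤ r) (hrn : r ≤ n) :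
    ∫ x in (0 : ℝ)..1,
        (Real.log (1 - x)) ^ 2 * (x ^ (r - 1) * (1 - x) ^ (n - r) / betaFn r (n + 1 - r))
      = (harmonicR n - harmonicR (n - r)) ^ 2
        + ∑ k ∈ Finset.Icc (n + 1 - r) n, (1 : ℝ) / (k : ℝ) ^ 2 :=
  beta_integral_sq_log_general n r hr1 hrn
end

section
/- For all natural numbers n ≥ 1 and r with 1 ≤ r ≤ n, ∑_{k=n+1−r}^{n} 1/k² ≤ 1/(n+1−r) + 1/(n+1−r)² − 1/(n+1) − 1/(2(n+1)²). -/
private lemma tele_bound (m : ℕ) (hm : 1 ≤ m) :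
    ∀ n : ℕ, m ≤ n + 1 →
      ∑ k ∈ Finset.Icc m n, (1 : ℝ) / (k : ℝ) ^ 2
        ≤ (1 / (m : ℝ) + 1 / (m : ℝ) ^ 2) - (1 / ((n : ℝ) + 1) + 1 / ((n : ℝ) + 1) ^ 2) := by
  intro n
  induction n with
  | zero =>
    intro h
    interval_cases m
    simp
  | succ n ih =>
    intro h
    rcases Nat.lt_or_ge n.succ m with hlt | hle
    · have : m = n + 2 := by omega
      subst this
      rw [Finset.Icc_eq_empty (by omega)]
      push_cast
      simp only [Finset.sum_empty]
      ring_nf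
      exact le_refl 0

    · have hmn : m ≤ n + 1 := hle
      rw [show n + 1 = n + 1 from rfl, Finset.sum_Icc_succ_top hmn]
      have ih' := ih hmn
      have hpos : (0:ℝ) < (n:ℝ) + 1 := by positivity
      have hpos2 : (0:ℝ) < (n:ℝ) + 2 := by positivity
      have key : (1:ℝ) / ((n+1 : ℕ) : ℝ) ^ 2
          ≤ (1 / ((n : ℝ) + 1) + 1 / ((n : ℝ) + 1) ^ 2)
            - (1 / (((n:ℕ):ℝ) + 1 + 1) + 1 / (((n:ℕ):ℝ) + 1 + 1) ^ 2) := by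
        push_cast
        rw [div_add_div _ _ (by positivity) (by positivity),
            div_add_div _ _ (by positivity) (by positivity),
            div_sub_div _ _ (by positivity) (by positivity),
            div_le_div_iff₀ (by positivity) (by positivity)]
        ring_nf
        have h0 : (0:ℝ) ≤ (n:ℝ) := Nat.cast_nonneg n
        nlinarith [pow_nonneg h0 2, pow_nonneg h0 3, pow_nonneg h0 4, pow_nonneg h0 5, pow_nonneg h0 6, h0]
      push_cast at key ih' ⊢
      linarith
/-- Bound on the exact MSE of the plug-in AURC weight estimator:
`∑_{k=n+1−r}^{n} 1/k² ≤ 1/(n+1−r) + 1/(n+1−r)² − 1/(n+1) − 1/(2(n+1)²)`. -/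
theorem mse_alpha_hat_bound (n r : ℕ) (hn : 1 ≤ n) (hr1 : 1 ≤ r) (hrn : r ≤ n) :
    ∑ k ∈ Finset.Icc (n + 1 - r) n, (1 : ℝ) / (k : ℝ) ^ 2
      ≤ 1 / ((n + 1 - r : ℕ) : ℝ) + 1 / ((n + 1 - r : ℕ) : ℝ) ^ 2
        - 1 / ((n : ℝ) + 1) - 1 / (2 * ((n : ℝ) + 1) ^ 2) := by
  have hm : 1 ≤ n + 1 - r := by omega
  have h := tele_bound (n + 1 - r) hm n (by omega)
  have hpos : (0:ℝ) < (n:ℝ) + 1 := by positivity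
  have : 1 / (2 * ((n : ℝ) + 1) ^ 2) ≤ 1 / ((n : ℝ) + 1) ^ 2 := by
    apply div_le_div_of_nonneg_left (by norm_num) (by positivity)
    nlinarith [pow_pos hpos 2]
  linarith
end

section
/- For all natural numbers n ≥ 1 and r with 1 ≤ r ≤ n, −log(1 − r/(n+1)) ≤ H_n − H_{n−r}, where H_m := ∑_{k=1}^{m} 1/k is the m-th harmonic number (H_0 := 0). That is, the weight estimator α̂' = −ln(1 − r/(n+1)) is bounded above by the weight estimator α̂ = H_n − H_{n−r}. -/
/-! `H_n - H_{n-r}` dominates `log ((n+1)/(n-r+1))` because `H_m - log (m+1)` increases with `m`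
(each step adds `1/(m+1) - log (1 + 1/(m+1)) ≥ 0`); and `1 - r/(n+1) = (n-r+1)/(n+1)`. -/

open Real

lemma harmonicR_eq_harmonic (m : ℕ) : harmonicR m = harmonic m := by
  simp [harmonicR, harmonic]

lemma log_div_le_harmonic_sub {a b : ℕ} (hab : a ≤ b) :
    log ((b + 1) / (a + 1)) ≤ (harmonic b : ℝ) - harmonic a := by
  have hmono := strictMono_eulerMascheroniSeq.monotone hab
  rw [eulerMascheroniSeq, eulerMascheroniSeq] at hmono
  rw [log_div (by positivity) (by positivity)]
  linarith

lemma one_sub_div_add_one_eq {n r : ℕ} (hrn : r ≤ n) :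
    1 - (r : ℝ) / (n + 1) = ((n - r : ℕ) + 1) / (n + 1) := by
  rw [Nat.cast_sub hrn]
  field_simp
  ring

theorem alpha_prime_le_alpha_general (n r : ℕ) (hrn : r ≤ n) :
    -Real.log (1 - (r : ℝ) / ((n : ℝ) + 1)) ≤ harmonicR n - harmonicR (n - r) := by
  rw [one_sub_div_add_one_eq hrn, ← log_inv, inv_div, harmonicR_eq_harmonic,
    harmonicR_eq_harmonic]
  exact log_div_le_harmonic_sub (Nat.sub_le n r)

/-- Jensen's inequality for the two AURC weight estimators:
`α̂′ = −log(1 − r/(n+1)) ≤ H_n − H_{n−r} = α̂`. -/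
theorem alpha_prime_le_alpha (n r : ℕ) (hn : 1 ≤ n) (hr1 : 1 ≤ r) (hrn : r ≤ n) :
    -Real.log (1 - (r : ℝ) / ((n : ℝ) + 1)) ≤ harmonicR n - harmonicR (n - r) :=
  alpha_prime_le_alpha_general n r hrn
end

section
/- For all natural numbers n ≥ 2 and r with 1 ≤ r ≤ n−1, the quantity Q := log(1 − r/(n+1)) + H_n − H_{n−r} satisfies 0 ≤ Q ≤ 1/(n−r), where H_m := ∑_{k=1}^{m} 1/k is the m-th harmonic number (H_0 := 0). -/
open Real

lemma eulerMascheroniSeq'_sub_eulerMascheroniSeq_le {m : ℕ} (hm : m ≠ 0) :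
    eulerMascheroniSeq' m - eulerMascheroniSeq m ≤ 1 / m := by
  have hm' : (0 : ℝ) < m := by positivity
  calc eulerMascheroniSeq' m - eulerMascheroniSeq m = log (1 + 1 / m) := by
        rw [eulerMascheroniSeq', eulerMascheroniSeq, if_neg hm, one_add_div hm'.ne',
          log_div (by positivity) hm'.ne']
        ring
    _ ≤ 1 / m := by linarith [log_le_sub_one_of_pos (show 0 < 1 + 1 / (m : ℝ) by positivity)]

lemma log_one_sub_div_add_harmonicR_sub {n r : ℕ} (h : r ≤ n) :
    log (1 - (r : ℝ) / ((n : ℝ) + 1)) + harmonicR n - harmonicR (n - r)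
      = eulerMascheroniSeq n - eulerMascheroniSeq (n - r) := by
  have hfrac : 1 - (r : ℝ) / ((n : ℝ) + 1) = ((n - r : ℕ) + 1) / ((n : ℝ) + 1) := by
    rw [Nat.cast_sub h]
    field_simp
    ring
  rw [hfrac, log_div (by positivity) (by positivity), harmonicR_eq_harmonic,
    harmonicR_eq_harmonic, eulerMascheroniSeq, eulerMascheroniSeq]
  ring

theorem gap_Q_bounds_general (n r : ℕ) (hrn : r ≤ n - 1) :
    0 ≤ Real.log (1 - (r : ℝ) / ((n : ℝ) + 1)) + harmonicR n - harmonicR (n - r)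
    ∧ Real.log (1 - (r : ℝ) / ((n : ℝ) + 1)) + harmonicR n - harmonicR (n - r)
        ≤ 1 / ((n - r : ℕ) : ℝ) := by
  rw [log_one_sub_div_add_harmonicR_sub (by omega)]
  refine ⟨sub_nonneg.2 (strictMono_eulerMascheroniSeq.monotone (Nat.sub_le n r)), ?_⟩
  rcases Nat.eq_zero_or_pos n with rfl | hn
  · simp -- here `Q = 0` and the bound is the junk value `1 / 0 = 0`
  calc eulerMascheroniSeq n - eulerMascheroniSeq (n - r)
      ≤ eulerMascheroniSeq' (n - r) - eulerMascheroniSeq (n - r) :=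
        sub_le_sub_right (eulerMascheroniSeq_lt_eulerMascheroniSeq' n (n - r)).le _
    _ ≤ 1 / ((n - r : ℕ) : ℝ) := eulerMascheroniSeq'_sub_eulerMascheroniSeq_le (by omega)

/-- The gap `Q = log(1 − r/(n+1)) + H_n − H_{n−r}` between the two AURC weight
estimators satisfies `0 ≤ Q ≤ 1/(n−r)` for `1 ≤ r ≤ n−1`. -/
theorem gap_Q_bounds (n r : ℕ) (hn : 2 ≤ n) (hr1 : 1 ≤ r) (hrn : r ≤ n - 1) :
    0 ≤ Real.log (1 - (r : ℝ) / ((n : ℝ) + 1)) + harmonicR n - harmonicR (n - r)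
    ∧ Real.log (1 - (r : ℝ) / ((n : ℝ) + 1)) + harmonicR n - harmonicR (n - r)
        ≤ 1 / ((n - r : ℕ) : ℝ) :=
  gap_Q_bounds_general n r hrn
end

section
/- For all natural numbers n ≥ 1 and r with 1 ≤ r ≤ n, r/n ≤ H_n − H_{n−r}, where H_m := ∑_{k=1}^{m} 1/k is the m-th harmonic number (H_0 := 0). Consequently, for any nonnegative losses ℓ : Fin n → ℝ and any ranks rᵢ forming a permutation of {1,…,n}, the SELE score (1/n²)∑_{i=1}^{n} rᵢ·ℓ(i) is at most the empirical AURC (1/n)∑_{i=1}^{n} (H_n − H_{n−rᵢ})·ℓ(i). -/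
open Finset

lemma harmonicR_sub_harmonicR {m n : ℕ} (hmn : m ≤ n) :
    harmonicR n - harmonicR m = ∑ k ∈ Ico m n, (1 : ℝ) / (k + 1) :=
  (sum_Ico_eq_sub _ hmn).symm

lemma div_le_harmonicR_sub_harmonicR {n r : ℕ} (hrn : r ≤ n) :
    (r : ℝ) / n ≤ harmonicR n - harmonicR (n - r) := by
  have hterm : ∀ k ∈ Ico (n - r) n, (1 : ℝ) / n ≤ 1 / (k + 1) := fun k hk => by
    gcongr
    exact_mod_cast (mem_Ico.mp hk).2
  calc (r : ℝ) / n = #(Ico (n - r) n) • ((1 : ℝ) / n) := by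
        rw [Nat.card_Ico, Nat.sub_sub_self hrn, nsmul_eq_mul, mul_one_div]
    _ ≤ ∑ k ∈ Ico (n - r) n, (1 : ℝ) / (k + 1) := card_nsmul_le_sum _ _ _ hterm
    _ = harmonicR n - harmonicR (n - r) := (harmonicR_sub_harmonicR (Nat.sub_le n r)).symm

theorem sele_le_empirical_aurc_general (n : ℕ) :
    (∀ r : ℕ, 1 ≤ r → r ≤ n → (r : ℝ) / n ≤ harmonicR n - harmonicR (n - r))
    ∧ ∀ σ : Equiv.Perm (Fin n), ∀ ℓ : Fin n → ℝ, (∀ i, 0 ≤ ℓ i) →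
      (1 / (n : ℝ) ^ 2) * ∑ i, (((σ i : ℕ) + 1 : ℕ) : ℝ) * ℓ i
        ≤ (1 / (n : ℝ)) * ∑ i, (harmonicR n - harmonicR (n - ((σ i : ℕ) + 1))) * ℓ i := by
  refine ⟨fun r _ hrn => div_le_harmonicR_sub_harmonicR hrn, fun σ ℓ hℓ => ?_⟩
  rw [mul_sum, mul_sum]
  refine sum_le_sum fun i _ => ?_
  have hweight := div_le_harmonicR_sub_harmonicR (σ i).isLt
  calc 1 / (n : ℝ) ^ 2 * ((((σ i : ℕ) + 1 : ℕ) : ℝ) * ℓ i)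
      = 1 / n * ((((σ i : ℕ) + 1 : ℕ) : ℝ) / n * ℓ i) := by ring
    _ ≤ 1 / n * ((harmonicR n - harmonicR (n - ((σ i : ℕ) + 1))) * ℓ i) := by
        gcongr
        exact hℓ i

/-- The SELE weight `r/n` is at most the plug-in AURC weight `H_n − H_{n−r}`,
hence the SELE score lower bounds the empirical AURC for nonnegative losses and
any ranks forming a permutation of `{1,…,n}`. -/
theorem sele_le_empirical_aurc (n : ℕ) (hn : 1 ≤ n) :
    (∀ r : ℕ, 1 ≤ r → r ≤ n → (r : ℝ) / n ≤ harmonicR n - harmonicR (n - r))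
    ∧ ∀ σ : Equiv.Perm (Fin n), ∀ ℓ : Fin n → ℝ, (∀ i, 0 ≤ ℓ i) →
      (1 / (n : ℝ) ^ 2) * ∑ i, (((σ i : ℕ) + 1 : ℕ) : ℝ) * ℓ i
        ≤ (1 / (n : ℝ)) * ∑ i, (harmonicR n - harmonicR (n - ((σ i : ℕ) + 1))) * ℓ i :=
  sele_le_empirical_aurc_general n
end

section
/- The 5-th harmonic number satisfies H_5 = 137/60 > 2, where H_m := ∑_{k=1}^{m} 1/k. Consequently, twice the SELE score does not upper bound the empirical AURC: there exist n and nonnegative losses for which the empirical AURC exceeds 2·SELE — concretely, for n = 5, ranks rᵢ = i, and losses ℓᵢ = 0 for i ≤ 4 and ℓ₅ = 1, one has (1/5)∑_{i=1}^{5} (H_5 − H_{5−i})·ℓᵢ = H_5/5 > 2/5 = 2·(1/25)∑_{i=1}^{5} i·ℓᵢ. -/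
/-- `H_5 = 137/60 > 2`, so twice the SELE score does not upper bound the
empirical AURC: for `n = 5`, ranks `rᵢ = i`, and losses `ℓᵢ = 𝟙[i = 5]`, the
empirical AURC `H_5/5` strictly exceeds `2/5 = 2 · SELE`. -/
theorem two_sele_not_upper_bound :
    harmonicR 5 = 137 / 60
    ∧ harmonicR 5 > 2
    ∧ (1 / 5 : ℝ) * ∑ i ∈ Finset.Icc 1 5,
        (harmonicR 5 - harmonicR (5 - i)) * (if i = 5 then (1 : ℝ) else 0)
      = harmonicR 5 / 5
    ∧ harmonicR 5 / 5 > 2 / 5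
    ∧ (2 / 5 : ℝ)
      = 2 * ((1 / 25 : ℝ) * ∑ i ∈ Finset.Icc (1 : ℕ) 5, (i : ℝ) * (if i = 5 then (1 : ℝ) else 0)) := by
  have h : harmonicR 5 = 137 / 60 := by
    simp [harmonicR, Finset.sum_range_succ]; norm_num
  refine ⟨h, by rw [h]; norm_num, ?_, by rw [h]; norm_num, ?_⟩
  · rw [show (Finset.Icc 1 5 : Finset ℕ) = {1,2,3,4,5} from rfl]
    simp [harmonicR]; ring
  · rw [show (Finset.Icc 1 5 : Finset ℕ) = {1,2,3,4,5} from rfl]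
    norm_num
end
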